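/- Let f : X → Y be an irreducible morphism in C_I(P) between minimal projective complexes. If there exists t > 0 such that Y^j = 0 for all j < -t and for all j > 0, X^{-(t+1)} ≠ 0, and X^1 ≠ 0, then f is sepic. -/

import Mathlib

/-!
Because `Y` vanishes in positive degrees, `f` factors as `X ⟶ σ≤0 X ⟶ Y` through the brutal
truncation `σ≤0 X = X.stupidTrunc (embeddingUpIntLE 0)`, which is again minimal projective since
the projection onto it is degreewise a split epimorphism. By irreducibility either the projection
is a split monomorphism, impossible as `X¹ ≠ 0 = (σ≤0 X)¹`, or the second factor is a split
epimorphism, and then `f` is sepic.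
-/

open CategoryTheory CategoryTheory.Limits

namespace ARShapes

variable {Λ : Type} [Ring Λ]

/-- Cochain complexes of (right) `Λ`-modules, i.e. `Λᵐᵒᵖ`-modules, indexed by `ℤ`. -/
abbrev Cplx (Λ : Type) [Ring Λ] : Type 1 := CochainComplex (ModuleCat Λᵐᵒᵖ) ℤ

/-- A minimal projective complex: a complex of finitely generated projective right
`Λ`-modules whose differentials have image contained in the radical of the target. -/
def IsMinimalProjective (X : Cplx Λ) : Prop :=
  (∀ i : ℤ, Module.Finite Λᵐᵒᵖ (X.X i)) ∧ (∀ i : ℤ, Module.Projective Λᵐᵒᵖ (X.X i)) ∧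
    (∀ i : ℤ, LinearMap.range (X.d i (i + 1)).hom ≤
      (Ideal.jacobson (⊥ : Ideal Λᵐᵒᵖ)) • (⊤ : Submodule Λᵐᵒᵖ (X.X (i + 1))))

/-- Irreducibility of a morphism in the category `P` of finitely generated projective
right `Λ`-modules (a full subcategory of all modules). -/
def IrreducibleP {M N : ModuleCat Λᵐᵒᵖ} (φ : M ⟶ N) : Prop :=
  ¬ IsSplitMono φ ∧ ¬ IsSplitEpi φ ∧
    ∀ (Z : ModuleCat Λᵐᵒᵖ), Module.Finite Λᵐᵒᵖ Z → Module.Projective Λᵐᵒᵖ Z →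
      ∀ (g : M ⟶ Z) (h : Z ⟶ N), φ = g ≫ h → IsSplitMono g ∨ IsSplitEpi h

/-- A chain map is smonic if all of its components are split monomorphisms. -/
def Smonic {X Y : Cplx Λ} (f : X ⟶ Y) : Prop := ∀ i : ℤ, IsSplitMono (f.f i)

/-- A chain map is sepic if all of its components are split epimorphisms. -/
def Sepic {X Y : Cplx Λ} (f : X ⟶ Y) : Prop := ∀ i : ℤ, IsSplitEpi (f.f i)

/-- A chain map is sirreducible if there is exactly one index `i₀` where the component is
irreducible in the category of finitely generated projective modules, the components in lower
degrees being split epimorphisms and those in higher degrees split monomorphisms.  (Since an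
irreducible morphism is neither a split monomorphism nor a split epimorphism, the uniqueness
of such an index is automatic.) -/
def Sirreducible {X Y : Cplx Λ} (f : X ⟶ Y) : Prop :=
  ∃ i₀ : ℤ, IrreducibleP (f.f i₀) ∧ (∀ i : ℤ, i < i₀ → IsSplitEpi (f.f i)) ∧
    (∀ i : ℤ, i₀ < i → IsSplitMono (f.f i))

/-- Irreducibility of a chain map in the category `C_I(P)` of minimal projective
complexes (a full subcategory of all complexes). -/
def IrreducibleC {X Y : Cplx Λ} (f : X ⟶ Y) : Prop :=
  ¬ IsSplitMono f ∧ ¬ IsSplitEpi f ∧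
    ∀ (Z : Cplx Λ), IsMinimalProjective Z →
      ∀ (g : X ⟶ Z) (h : Z ⟶ Y), f = g ≫ h → IsSplitMono g ∨ IsSplitEpi h

end ARShapes

lemma LinearMap.range_comp_le_smul_top {R M M' N N' : Type*} [Semiring R] [AddCommMonoid M]
    [AddCommMonoid M'] [AddCommMonoid N] [AddCommMonoid N'] [Module R M] [Module R M']
    [Module R N] [Module R N'] (I : Ideal R) (α : M' →ₗ[R] M) (d : M →ₗ[R] N) (β : N →ₗ[R] N')
    (hd : LinearMap.range d ≤ I • (⊤ : Submodule R N)) :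
    LinearMap.range (β ∘ₗ d ∘ₗ α) ≤ I • (⊤ : Submodule R N') :=
  calc LinearMap.range (β ∘ₗ d ∘ₗ α) ≤ (LinearMap.range d).map β := by
        rw [LinearMap.range_comp]
        exact Submodule.map_mono (LinearMap.range_comp_le_range _ _)
    _ ≤ (I • ⊤ : Submodule R N).map β := Submodule.map_mono hd
    _ ≤ I • (⊤ : Submodule R N') := by
        rw [Submodule.map_smul'']
        exact Submodule.smul_mono le_rfl le_top

namespace HomologicalComplex

lemma not_isSplitMono_of_isZero_X {C ι : Type*} [Category* C] [HasZeroMorphisms C]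
    {c : ComplexShape ι} {X Y : HomologicalComplex C c} (g : X ⟶ Y) {i : ι}
    (hY : IsZero (Y.X i)) (hX : ¬ IsZero (X.X i)) : ¬ IsSplitMono g := by
  intro
  have : Mono (g.f i) := inferInstanceAs (Mono ((eval _ _ i).map g))
  exact hX (hY.of_mono (g.f i))

variable {ι ι' : Type*} {c : ComplexShape ι} {c' : ComplexShape ι'} (e : c.Embedding c')
  [e.IsTruncLE] {C : Type*} [Category* C] [HasZeroMorphisms C] {K L : HomologicalComplex C c'}

lemma hasLift_of_isTruncLE {M : HomologicalComplex C c} (φ : K.restriction e ⟶ M) :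
    e.HasLift φ :=
  fun _ hj _ _ => (hj.false_of_isTruncLE).elim

variable [HasZeroObject C]

variable (K) in
noncomputable def toStupidTrunc : K ⟶ K.stupidTrunc e :=
  e.liftExtend (𝟙 _) (hasLift_of_isTruncLE e _)

variable (K) in
lemma isIso_toStupidTrunc_f {i : ι} {i' : ι'} (hi : e.f i = i') :
    IsIso ((K.toStupidTrunc e).f i') :=
  (e.isIso_liftExtend_f_iff _ _ hi).2 inferInstance

variable (K) in
lemma isSplitEpi_toStupidTrunc_f (i' : ι') : IsSplitEpi ((K.toStupidTrunc e).f i') := by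
  by_cases hi : ∃ i, e.f i = i'
  · obtain ⟨i, hi⟩ := hi
    have := K.isIso_toStupidTrunc_f e hi
    infer_instance
  · have hZ := K.isZero_stupidTrunc_X e i' (by simpa using hi)
    exact ⟨⟨hZ.to_ _, hZ.eq_of_src _ _⟩⟩

lemma toStupidTrunc_naturality (φ : K ⟶ L) :
    K.toStupidTrunc e ≫ stupidTruncMap φ e = φ ≫ L.toStupidTrunc e :=
  (e.homEquiv K (L.restriction e)).injective <| Subtype.ext <| by
    change e.homRestrict (e.liftExtend _ _ ≫ extendMap _ e) = e.homRestrict (φ ≫ e.liftExtend _ _)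
    rw [e.homRestrict_comp_extendMap, e.homRestrict_precomp, e.homRestrict_liftExtend,
      e.homRestrict_liftExtend, Category.id_comp, Category.comp_id]

instance isIso_toStupidTrunc [K.IsStrictlySupported e] : IsIso (K.toStupidTrunc e) := by
  suffices ∀ i', IsIso ((K.toStupidTrunc e).f i') from Hom.isIso_of_components _
  intro i'
  by_cases hi : ∃ i, e.f i = i'
  · obtain ⟨i, hi⟩ := hi
    exact K.isIso_toStupidTrunc_f e hi
  · have hi : ∀ i, e.f i ≠ i' := by simpa using hi
    exact ⟨⟨0, (K.isZero_X_of_isStrictlySupported e i' hi).eq_of_src _ _,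
      (K.isZero_stupidTrunc_X e i' hi).eq_of_src _ _⟩⟩

lemma eq_toStupidTrunc_comp (φ : K ⟶ L) [L.IsStrictlySupported e] :
    φ = K.toStupidTrunc e ≫ stupidTruncMap φ e ≫ inv (L.toStupidTrunc e) := by
  rw [← Category.assoc, toStupidTrunc_naturality, Category.assoc, IsIso.hom_inv_id,
    Category.comp_id]

end HomologicalComplex

namespace ARShapes

variable {Λ : Type} [Ring Λ]

lemma IsMinimalProjective.of_sepic {X Z : Cplx Λ} {π : X ⟶ Z} (hπ : Sepic π)
    (hX : IsMinimalProjective X) : IsMinimalProjective Z := by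
  obtain ⟨hfin, hproj, hrad⟩ := hX
  refine ⟨fun i => ?_, fun i => ?_, fun i => ?_⟩
  · have := hπ i
    exact Module.Finite.of_surjective (π.f i).hom
      ((ModuleCat.epi_iff_surjective _).1 inferInstance)
  · have := hπ i
    exact Module.Projective.of_split (section_ (π.f i)).hom (π.f i).hom
      (congrArg ModuleCat.Hom.hom (IsSplitEpi.id (π.f i)))
  · have := hπ i
    have hd : Z.d i (i + 1) = section_ (π.f i) ≫ X.d i (i + 1) ≫ π.f (i + 1) := by
      rw [← π.comm, ← Category.assoc, IsSplitEpi.id, Category.id_comp]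
    rw [hd]
    exact LinearMap.range_comp_le_smul_top _ _ _ _ (hrad i)

lemma Sepic.comp {X Y Z : Cplx Λ} {g : X ⟶ Y} (hg : Sepic g) (h : Y ⟶ Z) [IsSplitEpi h] :
    Sepic (g ≫ h) := fun i => by
  have := hg i
  have : IsSplitEpi (h.f i) := inferInstanceAs (IsSplitEpi ((HomologicalComplex.eval _ _ i).map h))
  rw [HomologicalComplex.comp_f]
  infer_instance

theorem sepic_of_irreducible
    {Λ : Type} [Ring Λ]
    (X Y : Cplx Λ) (hX : IsMinimalProjective X)
    (f : X ⟶ Y) (hf : IrreducibleC f)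
    (h₂ : ∀ j : ℤ, 0 < j → IsZero (Y.X j))
    (h₄ : ¬ IsZero (X.X 1)) :
    Sepic f := by
  let e := ComplexShape.embeddingUpIntLE 0
  have he (j : ℤ) : (∀ n, e.f n ≠ j) ↔ 0 < j := ComplexShape.notMem_range_embeddingUpIntLE_iff 0 j
  have : Y.IsStrictlySupported e := ⟨fun j hj => h₂ j ((he j).1 hj)⟩
  have hπ : Sepic (X.toStupidTrunc e) := X.isSplitEpi_toStupidTrunc_f e
  have hfac := X.eq_toStupidTrunc_comp e f
  rcases hf.2.2 _ (IsMinimalProjective.of_sepic hπ hX) _ _ hfac with hmono | hepi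
  · exact absurd hmono (HomologicalComplex.not_isSplitMono_of_isZero_X _
      (X.isZero_stupidTrunc_X e 1 ((he 1).2 one_pos)) h₄)
  · rw [hfac]
    exact hπ.comp _

end ARShapes
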